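/- Let n ≥ 1, let A ⊆ ℝ^n be a finite set, and let k ≥ 0 be an integer. Let d_k(A) denote the number of subsets Y ⊆ A with |Y| = k such that the vectors of Y are linearly independent and Y is contained in some strictly larger subset X ⊆ A with rank(X) = k. Then d_k(A) ≤ (k+1) · ρ_{k+1}^k(A). -/
import Mathlib


noncomputable section

/-- A set `X ⊆ ℝⁿ` consists of linearly independent vectors. -/
def indepSet {n : ℕ} (X : Set (Fin n → ℝ)) : Prop :=
  LinearIndependent ℝ (fun x : X => (x : Fin n → ℝ))

/-- `rank X`: the dimension of the linear span of `X ⊆ ℝⁿ`. -/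
def rankOf {n : ℕ} (X : Set (Fin n → ℝ)) : ℕ :=
  Module.finrank ℝ ↥(Submodule.span ℝ X)

/-- `ρₖʲ(A)`: the number of subsets `X ⊆ A` with `|X| = k` and `rank X = j`. -/
def rho {n : ℕ} (k j : ℕ) (A : Set (Fin n → ℝ)) : ℕ :=
  Set.ncard {X : Set (Fin n → ℝ) | X ⊆ A ∧ X.ncard = k ∧ rankOf X = j}

/-- `d_k(A)`: the number of subsets `Y ⊆ A` of cardinality `k` that consist of linearly
independent vectors and are contained in a strictly larger subset `X ⊆ A` whose rank
equals `k`. -/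
def dCount {n : ℕ} (k : ℕ) (A : Set (Fin n → ℝ)) : ℕ :=
  Set.ncard {Y : Set (Fin n → ℝ) | Y ⊆ A ∧ Y.ncard = k ∧ indepSet Y ∧
    ∃ X : Set (Fin n → ℝ), Y ⊂ X ∧ X ⊆ A ∧ rankOf X = k}

private lemma key_step {n : ℕ} {A : Set (Fin n → ℝ)} (hA : A.Finite) {k : ℕ}
    {Y : Set (Fin n → ℝ)} (hYA : Y ⊆ A) (hYc : Y.ncard = k) (hYi : indepSet Y)
    {X : Set (Fin n → ℝ)} (hYX : Y ⊂ X) (hXA : X ⊆ A) (hXr : rankOf X = k) :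
    ∃ X' : Set (Fin n → ℝ), (X' ⊆ A ∧ X'.ncard = k + 1 ∧ rankOf X' = k) ∧ Y ⊆ X' := by
  obtain ⟨x, hxX, hxY⟩ := Set.exists_of_ssubset hYX
  have hYfin : Y.Finite := hA.subset hYA
  have hXfin : X.Finite := hA.subset hXA
  have : Fintype Y := hYfin.fintype
  have hYr : Module.finrank ℝ ↥(Submodule.span ℝ Y) = k := by
    rw [finrank_span_set_eq_card hYi]
    rwa [← Set.ncard_eq_toFinset_card' Y]
  have hspan : Submodule.span ℝ Y = Submodule.span ℝ X := by
    apply Submodule.eq_of_le_of_finrank_eq (Submodule.span_mono hYX.subset)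
    rw [hYr]; exact hXr.symm
  have hx : x ∈ Submodule.span ℝ Y := hspan ▸ Submodule.subset_span hxX
  refine ⟨insert x Y, ⟨?_, ?_, ?_⟩, Set.subset_insert x Y⟩
  · exact Set.insert_subset (hXA hxX) hYA
  · rw [Set.ncard_insert_of_notMem hxY hYfin, hYc]
  · unfold rankOf
    rw [Submodule.span_insert_eq_span hx, hYr]

/-- For a finite set `A ⊆ ℝⁿ` and `k ≥ 0`, `d_k(A) ≤ (k+1) · ρ_{k+1}ᵏ(A)`. -/
theorem dCount_le_rho
    (n : ℕ) (hn : 1 ≤ n)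
    (A : Set (Fin n → ℝ)) (hA : A.Finite) (k : ℕ) :
    dCount k A ≤ (k + 1) * rho (k + 1) k A := by
  classical
  set D := {Y : Set (Fin n → ℝ) | Y ⊆ A ∧ Y.ncard = k ∧ indepSet Y ∧
    ∃ X : Set (Fin n → ℝ), Y ⊂ X ∧ X ⊆ A ∧ rankOf X = k} with hDdef
  set R := {X : Set (Fin n → ℝ) | X ⊆ A ∧ X.ncard = k + 1 ∧ rankOf X = k} with hRdef
  have hDfin : D.Finite := hA.finite_subsets.subset (fun Y hY => hY.1)
  have hRfin : R.Finite := hA.finite_subsets.subset (fun X hX => hX.1)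
  -- choice function
  have hex : ∀ Y ∈ D, ∃ X' : Set (Fin n → ℝ), X' ∈ R ∧ Y ⊆ X' := by
    rintro Y ⟨hYA, hYc, hYi, X, hYX, hXA, hXr⟩
    obtain ⟨X', h1, h2⟩ := key_step hA hYA hYc hYi hYX hXA hXr
    exact ⟨X', h1, h2⟩
  let f : Set (Fin n → ℝ) → Set (Fin n → ℝ) := fun Y =>
    if h : ∃ X' : Set (Fin n → ℝ), X' ∈ R ∧ Y ⊆ X' then h.choose else ∅
  have hf : ∀ Y ∈ D, f Y ∈ R ∧ Y ⊆ f Y := by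
    intro Y hY
    have h := hex Y hY
    simp only [f, dif_pos h]
    exact h.choose_spec
  have hcard : hDfin.toFinset.card ≤ (k + 1) * hRfin.toFinset.card := by
    apply Finset.card_le_mul_card_image_of_maps_to
      (t := hRfin.toFinset) (f := f)
    · intro Y hY
      rw [Set.Finite.mem_toFinset] at *
      exact (hf Y hY).1
    · intro b hb
      rw [Set.Finite.mem_toFinset] at hb
      have hbfin : b.Finite := hA.subset hb.1
      have hbc : b.ncard = k + 1 := hb.2.1
      calc (hDfin.toFinset.filter (fun Y => f Y = b)).card
          ≤ (hbfin.toFinset.image (fun x => b \ {x})).card := by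
            apply Finset.card_le_card
            intro Y hY
            rw [Finset.mem_filter, Set.Finite.mem_toFinset] at hY
            obtain ⟨hYD, hfY⟩ := hY
            have hYb : Y ⊆ b := hfY ▸ (hf Y hYD).2
            have hYc : Y.ncard = k := hYD.2.1
            have h1 : (b \ Y).ncard = 1 := by
              rw [Set.ncard_diff hYb (hbfin.subset hYb), hbc, hYc]; omega
            obtain ⟨x, hx⟩ := Set.ncard_eq_one.mp h1
            have hxb : x ∈ b := by
              have : x ∈ b \ Y := hx ▸ rfl
              exact this.1
            rw [Finset.mem_image]
            refine ⟨x, hbfin.mem_toFinset.mpr hxb, ?_⟩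
            rw [← hx, Set.diff_diff_cancel_left hYb]
        _ ≤ hbfin.toFinset.card := Finset.card_image_le
        _ = k + 1 := by rw [← Set.ncard_eq_toFinset_card b hbfin]; exact hbc
  have hD : dCount k A = hDfin.toFinset.card := by
    rw [dCount, Set.ncard_eq_toFinset_card _ hDfin]
  have hR : rho (k + 1) k A = hRfin.toFinset.card := by
    rw [rho, Set.ncard_eq_toFinset_card _ hRfin]
  rw [hD, hR]
  exact hcard
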